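/- arXiv:2306.02226 — 6 statements merged into one kernel-verified Lean document; each statement's English description precedes it below -/
import Mathlib

section
/- For all a, b > 0, the function ξ ↦ α*₁(a,b,ξ) is twice differentiable on ℝ, and its second derivative at ξ equals a·g((a/b)·e^{-2ξ}) + b·g((b/a)·e^{2ξ}). -/
open Real

/-- The logarithmic mean `Λ(s,t)`. -/
noncomputable def logMean (s t : ℝ) : ℝ :=
  if s = t then s else (s - t) / (Real.log s - Real.log t)

/-- The harmonic-logarithmic mean `Λ_H(s,t) = st/Λ(s,t)`. -/
noncomputable def harmLogMean (s t : ℝ) : ℝ := s * t / logMean s t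

/-- `α*₁(a,b,ξ) = ∫₀^ξ sinh(x) Λ_H(a e^{-x}, b e^{x}) dx`. -/
noncomputable def alphaOne (a b ξ : ℝ) : ℝ :=
  ∫ x in (0:ℝ)..ξ, Real.sinh x * harmLogMean (a * Real.exp (-x)) (b * Real.exp x)

/-- `g(x) = (x log x - x + 1)/(x-1)²` for `x ≠ 1`, with `g(1) = 1/2`. -/
noncomputable def gFun (x : ℝ) : ℝ :=
  if x = 1 then 1 / 2 else (x * Real.log x - x + 1) / (x - 1) ^ 2

/-!
With `w = log s - log t` one has `Λ_H(s,t) = s·L(w)` for `L(w) = w/(eʷ - 1)`, so the integrand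
of `α*₁` is the smooth function `(a/2)(1 - e^{-2x})·L(log a - log b - 2x)`, and this is the first
derivative. Since `L'(w) = -g(eʷ)`, differentiating the reflection identity `L(-w) = eʷ L(w)`
gives `g(e^{-w}) = eʷ (L(w) - g(eʷ))`, which turns the derivative of the integrand into the
symmetric form `a·g(eʷ) + b·g(e^{-w})`.
-/

open Filter Topology

noncomputable def divExpSubOne (w : ℝ) : ℝ := if w = 0 then 1 else w / (exp w - 1)

lemma exp_sub_one_ne_zero {w : ℝ} (hw : w ≠ 0) : exp w - 1 ≠ 0 :=
  sub_ne_zero.mpr fun h => hw (exp_eq_one_iff w |>.mp h)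

lemma divExpSubOne_of_ne_zero {w : ℝ} (hw : w ≠ 0) : divExpSubOne w = w / (exp w - 1) :=
  if_neg hw

lemma gFun_exp_of_ne_zero {w : ℝ} (hw : w ≠ 0) :
    gFun (exp w) = (w * exp w - exp w + 1) / (exp w - 1) ^ 2 := by
  rw [gFun, if_neg fun h => hw (exp_eq_one_iff w |>.mp h), log_exp, mul_comm]

lemma tendsto_exp_sub_one_div_self :
    Tendsto (fun x => (exp x - 1) / x) (𝓝[≠] 0) (𝓝 1) := by
  have h := hasDerivAt_iff_tendsto_slope.mp (hasDerivAt_exp 0)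
  rw [exp_zero] at h
  exact h.congr fun x => by rw [slope_def_field, exp_zero, sub_zero]

lemma tendsto_exp_sub_one_sub_self_div_sq :
    Tendsto (fun x => (exp x - 1 - x) / x ^ 2) (𝓝[≠] 0) (𝓝 (1 / 2)) := by
  refine HasDerivAt.lhopital_zero_nhdsNE (f' := fun x => exp x - 1) (g' := fun x => 2 * x)
    (.of_forall fun x => ((hasDerivAt_exp x).sub_const 1).sub (hasDerivAt_id x))
    (.of_forall fun x => by simpa using hasDerivAt_pow 2 x)
    (eventually_nhdsWithin_of_forall fun x hx => mul_ne_zero two_ne_zero hx) ?_ ?_ ?_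
  · have h : Continuous fun x => exp x - 1 - x := by fun_prop
    simpa using h.tendsto 0 |>.mono_left nhdsWithin_le_nhds
  · have h : Continuous fun x : ℝ => x ^ 2 := by fun_prop
    simpa using h.tendsto 0 |>.mono_left nhdsWithin_le_nhds
  · convert tendsto_exp_sub_one_div_self.div_const 2 using 2 with x
    rw [div_div, mul_comm]

lemma hasDerivAt_divExpSubOne_zero : HasDerivAt divExpSubOne (-gFun (exp 0)) 0 := by
  have hg : -gFun (exp 0) = -(1 / 2 * 1⁻¹) := by simp [gFun]
  rw [hasDerivAt_iff_tendsto_slope, hg]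
  -- `(L x - 1) / x = -((eˣ - 1 - x) / x²) · ((eˣ - 1) / x)⁻¹`
  refine (tendsto_exp_sub_one_sub_self_div_sq.mul
    (tendsto_exp_sub_one_div_self.inv₀ one_ne_zero)).neg.congr' ?_
  filter_upwards [self_mem_nhdsWithin] with x (hx : x ≠ 0)
  have := exp_sub_one_ne_zero hx
  rw [slope_def_field, divExpSubOne_of_ne_zero hx, divExpSubOne, if_pos rfl]
  field_simp
  ring

lemma hasDerivAt_divExpSubOne (w : ℝ) : HasDerivAt divExpSubOne (-gFun (exp w)) w := by
  rcases eq_or_ne w 0 with rfl | hw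
  · exact hasDerivAt_divExpSubOne_zero
  have hquot : HasDerivAt (fun x => x / (exp x - 1))
      ((1 * (exp w - 1) - w * exp w) / (exp w - 1) ^ 2) w :=
    (hasDerivAt_id w).div ((hasDerivAt_exp w).sub_const 1) (exp_sub_one_ne_zero hw)
  have heq : divExpSubOne =ᶠ[𝓝 w] fun x => x / (exp x - 1) := by
    filter_upwards [isOpen_ne.mem_nhds hw] with x hx
    exact divExpSubOne_of_ne_zero hx
  have hval : -gFun (exp w) = (1 * (exp w - 1) - w * exp w) / (exp w - 1) ^ 2 := by
    rw [gFun_exp_of_ne_zero hw]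
    ring
  exact hval ▸ hquot.congr_of_eventuallyEq heq

lemma divExpSubOne_neg (w : ℝ) : divExpSubOne (-w) = exp w * divExpSubOne w := by
  rcases eq_or_ne w 0 with rfl | hw
  · simp [divExpSubOne]
  have h₁ := exp_sub_one_ne_zero hw
  have h₂ : 1 - exp w ≠ 0 := fun h => h₁ (by linarith)
  rw [divExpSubOne_of_ne_zero hw, divExpSubOne_of_ne_zero (neg_ne_zero.mpr hw), exp_neg]
  field_simp
  ring

lemma gFun_exp_neg (w : ℝ) : gFun (exp (-w)) = exp w * (divExpSubOne w - gFun (exp w)) := by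
  have hleft : HasDerivAt (fun x => divExpSubOne (-x)) (-gFun (exp (-w)) * -1) w :=
    (hasDerivAt_divExpSubOne (-w)).comp w (hasDerivAt_neg w)
  have hright : HasDerivAt (fun x => exp x * divExpSubOne x)
      (exp w * divExpSubOne w + exp w * -gFun (exp w)) w :=
    (hasDerivAt_exp w).mul (hasDerivAt_divExpSubOne w)
  simp only [divExpSubOne_neg] at hleft
  linarith [hleft.unique hright]

lemma harmLogMean_eq_mul_divExpSubOne {s t : ℝ} (hs : 0 < s) (ht : 0 < t) :
    harmLogMean s t = s * divExpSubOne (log s - log t) := by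
  rcases eq_or_ne s t with rfl | hst
  · simp [harmLogMean, logMean, divExpSubOne, hs.ne']
  have hw : log s - log t ≠ 0 := sub_ne_zero.mpr fun h => hst (log_injOn_pos hs ht h)
  have hexp : exp (log s - log t) = s / t := by rw [exp_sub, exp_log hs, exp_log ht]
  have := sub_ne_zero.mpr hst
  rw [harmLogMean, logMean, if_neg hst, divExpSubOne_of_ne_zero hw, hexp]
  field_simp

noncomputable def alphaOneDeriv (a b ξ : ℝ) : ℝ :=
  a / 2 * (1 - exp (-2 * ξ)) * divExpSubOne (log a - log b - 2 * ξ)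

lemma sinh_mul_harmLogMean {a b : ℝ} (ha : 0 < a) (hb : 0 < b) (x : ℝ) :
    sinh x * harmLogMean (a * exp (-x)) (b * exp x) = alphaOneDeriv a b x := by
  have hlog : log (a * exp (-x)) - log (b * exp x) = log a - log b - 2 * x := by
    rw [log_mul ha.ne' (exp_ne_zero _), log_mul hb.ne' (exp_ne_zero _), log_exp, log_exp]
    ring
  have hsinh : sinh x * exp (-x) = (1 - exp (-2 * x)) / 2 := by
    rw [sinh_eq, show -2 * x = -x + -x by ring, exp_add, exp_neg]
    field_simp
  rw [harmLogMean_eq_mul_divExpSubOne (by positivity) (by positivity), hlog, ← mul_assoc,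
    mul_left_comm, hsinh, alphaOneDeriv]
  ring

lemma continuous_divExpSubOne : Continuous divExpSubOne :=
  continuous_iff_continuousAt.mpr fun w => (hasDerivAt_divExpSubOne w).continuousAt

lemma continuous_alphaOneDeriv (a b : ℝ) : Continuous (alphaOneDeriv a b) := by
  have := continuous_divExpSubOne
  unfold alphaOneDeriv
  fun_prop

lemma hasDerivAt_alphaOne {a b : ℝ} (ha : 0 < a) (hb : 0 < b) (ξ : ℝ) :
    HasDerivAt (alphaOne a b) (alphaOneDeriv a b ξ) ξ := by
  have heq : alphaOne a b = fun ξ => ∫ x in (0 : ℝ)..ξ, alphaOneDeriv a b x :=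
    funext fun ξ => intervalIntegral.integral_congr fun x _ => sinh_mul_harmLogMean ha hb x
  exact heq ▸ ((continuous_alphaOneDeriv a b).integral_hasStrictDerivAt 0 ξ).hasDerivAt

lemma hasDerivAt_alphaOneDeriv {a b : ℝ} (ha : 0 < a) (hb : 0 < b) (ξ : ℝ) :
    HasDerivAt (alphaOneDeriv a b)
      (a * gFun (a / b * exp (-2 * ξ)) + b * gFun (b / a * exp (2 * ξ))) ξ := by
  set w := log a - log b - 2 * ξ with hw
  have hexp : exp w = a / b * exp (-2 * ξ) := by
    rw [exp_sub, exp_sub, exp_log ha, exp_log hb, neg_mul, exp_neg]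
    ring
  have hexp_neg : exp (-w) = b / a * exp (2 * ξ) := by
    rw [exp_neg, hexp, neg_mul, exp_neg]
    field_simp
  have hweight : a * exp (-2 * ξ) = b * exp w := by
    rw [hexp]
    field_simp
  have hfactor : HasDerivAt (fun x => a / 2 * (1 - exp (-2 * x))) (a * exp (-2 * ξ)) ξ :=
    ((((hasDerivAt_id' ξ).const_mul (-2)).exp.const_sub 1).const_mul (a / 2)).congr_deriv
      (by ring)
  have hmean : HasDerivAt (fun x => divExpSubOne (log a - log b - 2 * x))
      (2 * gFun (exp w)) ξ := by
    have h := (hasDerivAt_divExpSubOne w).comp ξ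
      (((hasDerivAt_id' ξ).const_mul 2).const_sub (log a - log b))
    exact h.congr_deriv (by ring)
  rw [← hexp, ← hexp_neg, gFun_exp_neg]
  refine (hfactor.mul hmean).congr_deriv ?_
  rw [← hw]
  linear_combination (divExpSubOne w - gFun (exp w)) * hweight

/-- For `a, b > 0` the map `ξ ↦ α*₁(a,b,ξ)` is twice differentiable on `ℝ`, with
second derivative `a g((a/b)e^{-2ξ}) + b g((b/a)e^{2ξ})`. -/
theorem alphaOne_second_deriv (a b : ℝ) (ha : 0 < a) (hb : 0 < b) :
    ∃ f' : ℝ → ℝ,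
      (∀ ξ : ℝ, HasDerivAt (fun ξ' => alphaOne a b ξ') (f' ξ) ξ) ∧
      (∀ ξ : ℝ, HasDerivAt f'
        (a * gFun (a / b * Real.exp (-2 * ξ)) + b * gFun (b / a * Real.exp (2 * ξ))) ξ) :=
  ⟨alphaOneDeriv a b, hasDerivAt_alphaOne ha hb, hasDerivAt_alphaOneDeriv ha hb⟩
end

section
/- For all a, b > 0, the function ξ ↦ α*₁(a,b,ξ) is convex on ℝ; more precisely, it is twice differentiable and its second derivative at every ξ ∈ ℝ satisfies min{a,b} ≤ ∂²_ξ α*₁(a,b,ξ) ≤ max{a,b}. -/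
/-!
Write `a = q e^m`, `b = q e^{-m}` and `u = m - x`. Then `a e^{-x} = q e^u` and
`b e^x = q e^{-u}`, whose harmonic-logarithmic mean is `q u / sinh u`, and expanding
`sinh x = sinh (m - u)` turns the integrand into `q sinh m · u coth u - q cosh m · u`.
Its derivative in `x` is `q cosh m - q sinh m · (u coth u)'`, a convex combination of `a`
and `b` because `|(u coth u)'| ≤ 1`; at `t = 2u` this is `|sinh t - t| ≤ cosh t - 1`,
i.e. `e^{±t} ≥ 1 ± t`.
-/

open Real

open Set

lemma dslope_sinh_zero_of_ne {u : ℝ} (hu : u ≠ 0) : dslope sinh 0 u = sinh u / u := by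
  rw [dslope_of_ne _ hu, slope_def_field, sinh_zero, sub_zero, sub_zero]

lemma dslope_sinh_zero_pos (u : ℝ) : 0 < dslope sinh 0 u := by
  rcases eq_or_ne u 0 with rfl | hu
  · simp
  · rw [dslope_sinh_zero_of_ne hu]
    rcases hu.lt_or_gt with h | h
    · exact div_pos_of_neg_of_neg (sinh_neg_iff.mpr h) h
    · exact div_pos (sinh_pos_iff.mpr h) h

lemma dslope_sinh_zero_neg (u : ℝ) : dslope sinh 0 (-u) = dslope sinh 0 u := by
  rcases eq_or_ne u 0 with rfl | hu
  · simp
  · rw [dslope_sinh_zero_of_ne hu, dslope_sinh_zero_of_ne (neg_ne_zero.mpr hu), sinh_neg,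
      neg_div_neg_eq]

lemma sinh_div_dslope_sinh_zero (u : ℝ) : sinh u / dslope sinh 0 u = u := by
  rcases eq_or_ne u 0 with rfl | hu
  · simp
  · rw [dslope_sinh_zero_of_ne hu, div_div_cancel₀ (sinh_ne_zero.mpr hu)]

lemma differentiable_dslope_sinh_zero : Differentiable ℝ (dslope sinh 0) := by
  intro u
  rcases eq_or_ne u 0 with rfl | hu
  · obtain ⟨p, hp⟩ := analyticAt_sinh (x := (0 : ℝ))
    exact hp.has_fpower_series_dslope_fslope.differentiableAt
  · exact (differentiableAt_dslope_of_ne hu).mpr differentiableAt_sinh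

/-- `u coth u`, with the removable singularity at `0` filled through `dslope`, which keeps it
analytic there. -/
noncomputable def mulCoth (u : ℝ) : ℝ := cosh u / dslope sinh 0 u

lemma mulCoth_of_ne {u : ℝ} (hu : u ≠ 0) : mulCoth u = u * cosh u / sinh u := by
  rw [mulCoth, dslope_sinh_zero_of_ne hu, div_div_eq_mul_div, mul_comm]

lemma mulCoth_neg (u : ℝ) : mulCoth (-u) = mulCoth u := by
  rw [mulCoth, mulCoth, cosh_neg, dslope_sinh_zero_neg]

lemma differentiable_mulCoth : Differentiable ℝ mulCoth :=
  differentiable_cosh.div differentiable_dslope_sinh_zero fun u => (dslope_sinh_zero_pos u).ne'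

lemma hasDerivAt_mulCoth_of_ne {u : ℝ} (hu : u ≠ 0) :
    HasDerivAt mulCoth ((sinh u * cosh u - u) / sinh u ^ 2) u := by
  have h : HasDerivAt (fun v => v * cosh v / sinh v)
      (((1 * cosh u + u * sinh u) * sinh u - u * cosh u * cosh u) / sinh u ^ 2) u :=
    ((hasDerivAt_id' u).mul (hasDerivAt_cosh u)).div (hasDerivAt_sinh u) (sinh_ne_zero.mpr hu)
  refine (h.congr_of_eventuallyEq ?_).congr_deriv ?_
  · filter_upwards [eventually_ne_nhds hu] with v hv
    exact mulCoth_of_ne hv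
  · linear_combination (-u / sinh u ^ 2) * cosh_sq_sub_sinh_sq u

lemma deriv_mulCoth_zero : deriv mulCoth 0 = 0 := by
  have h := deriv_comp_neg mulCoth 0
  simp only [mulCoth_neg, neg_zero] at h
  linarith

lemma abs_sinh_sub_self_le (t : ℝ) : |sinh t - t| ≤ cosh t - 1 := by
  have h₁ := add_one_le_exp t
  have h₂ := add_one_le_exp (-t)
  rw [← cosh_add_sinh] at h₁
  rw [← cosh_sub_sinh] at h₂
  exact abs_le.mpr ⟨by linarith, by linarith⟩

lemma abs_deriv_mulCoth_le_one (u : ℝ) : |deriv mulCoth u| ≤ 1 := by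
  rcases eq_or_ne u 0 with rfl | hu
  · simp [deriv_mulCoth_zero]
  have hs : 0 < sinh u ^ 2 := by positivity [sinh_ne_zero.mpr hu]
  rw [(hasDerivAt_mulCoth_of_ne hu).deriv, abs_div, abs_of_pos hs, div_le_one hs]
  -- the doubling formulas turn this into `|sinh t - t| ≤ cosh t - 1` at `t = 2u`
  have h := abs_sinh_sub_self_le (2 * u)
  rw [sinh_two_mul, cosh_two_mul, cosh_sq',
    show 2 * sinh u * cosh u - 2 * u = 2 * (sinh u * cosh u - u) by ring, abs_mul, abs_two] at h
  linarith

lemma harmLogMean_mul_exp_mul_exp_neg {q : ℝ} (hq : 0 < q) (u : ℝ) :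
    harmLogMean (q * exp u) (q * exp (-u)) = q / dslope sinh 0 u := by
  rcases eq_or_ne u 0 with rfl | hu
  · simp [harmLogMean, logMean, hq.ne']
  have hne : q * exp u ≠ q * exp (-u) := fun h => hu <| by
    linarith [exp_injective (mul_left_cancel₀ hq.ne' h)]
  have hprod : q * exp u * (q * exp (-u)) = q ^ 2 := by
    rw [mul_mul_mul_comm, ← exp_add, add_neg_cancel, exp_zero, mul_one, sq]
  have hdiff : q * exp u - q * exp (-u) = 2 * q * sinh u := by
    rw [sinh_eq]; ring
  rw [harmLogMean, logMean, if_neg hne, log_mul hq.ne' (exp_pos u).ne',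
    log_mul hq.ne' (exp_pos (-u)).ne', log_exp, log_exp, dslope_sinh_zero_of_ne hu, hprod, hdiff]
  field_simp [sinh_ne_zero.mpr hu]
  ring

lemma sinh_mul_harmLogMean_s8 {q : ℝ} (hq : 0 < q) (m x : ℝ) :
    sinh x * harmLogMean (q * exp m * exp (-x)) (q * exp (-m) * exp x)
      = q * sinh m * mulCoth (m - x) - q * cosh m * (m - x) := by
  have hu : q * exp m * exp (-x) = q * exp (m - x) := by rw [mul_assoc, ← exp_add, sub_eq_add_neg]
  have hv : q * exp (-m) * exp x = q * exp (-(m - x)) := by rw [mul_assoc, ← exp_add]; ring_nf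
  have hx : sinh x = sinh m * cosh (m - x) - cosh m * sinh (m - x) := by
    rw [← sinh_sub, sub_sub_cancel]
  rw [hu, hv, harmLogMean_mul_exp_mul_exp_neg hq, mulCoth, hx]
  linear_combination (-(q * cosh m)) * sinh_div_dslope_sinh_zero (m - x)

lemma exists_eq_mul_exp_and_eq_mul_exp_neg {a b : ℝ} (ha : 0 < a) (hb : 0 < b) :
    ∃ q m : ℝ, 0 < q ∧ a = q * exp m ∧ b = q * exp (-m) := by
  refine ⟨exp ((log a + log b) / 2), (log a - log b) / 2, exp_pos _, ?_, ?_⟩ <;>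
    rw [← exp_add] <;> ring_nf
  · exact (exp_log ha).symm
  · exact (exp_log hb).symm

lemma cosh_sub_sinh_mul_mem_uIcc {D : ℝ} (hD : |D| ≤ 1) (q m : ℝ) :
    q * cosh m - q * sinh m * D ∈ uIcc (q * exp m) (q * exp (-m)) := by
  obtain ⟨hD₁, hD₂⟩ := abs_le.mp hD
  have hcomb : q * cosh m - q * sinh m * D
      = ((1 - D) / 2) • (q * exp m) + ((1 + D) / 2) • (q * exp (-m)) := by
    rw [cosh_eq, sinh_eq, smul_eq_mul, smul_eq_mul]; ring
  rw [hcomb]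
  exact ⟨Convex.min_le_combo _ _ (by linarith) (by linarith) (by ring),
    Convex.combo_le_max _ _ (by linarith) (by linarith) (by ring)⟩

lemma hasDerivAt_mulCoth_sub (A B m x : ℝ) :
    HasDerivAt (fun y => A * mulCoth (m - y) - B * (m - y))
      (B - A * deriv mulCoth (m - x)) x := by
  have hu : HasDerivAt (fun y : ℝ => m - y) (-1) x := by simpa using (hasDerivAt_id x).const_sub m
  have h : HasDerivAt (fun y => A * mulCoth (m - y) - B * (m - y))
      (A * (deriv mulCoth (m - x) * -1) - B * -1) x :=
    (((differentiable_mulCoth (m - x)).hasDerivAt.comp x hu).const_mul A).sub (hu.const_mul B)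
  exact h.congr_deriv (by ring)

lemma hasDerivAt_alphaOne_s8 {q : ℝ} (hq : 0 < q) (m ξ : ℝ) :
    HasDerivAt (alphaOne (q * exp m) (q * exp (-m)))
      (q * sinh m * mulCoth (m - ξ) - q * cosh m * (m - ξ)) ξ := by
  have h : alphaOne (q * exp m) (q * exp (-m))
      = fun ξ => ∫ x in (0 : ℝ)..ξ, q * sinh m * mulCoth (m - x) - q * cosh m * (m - x) :=
    funext fun ξ => intervalIntegral.integral_congr fun x _ => sinh_mul_harmLogMean_s8 hq m x
  have hmulCoth := differentiable_mulCoth.continuous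
  rw [h]
  exact ((by fun_prop : Continuous _).integral_hasStrictDerivAt 0 ξ).hasDerivAt

lemma convexOn_univ_of_hasDerivAt2_nonneg {f f' f'' : ℝ → ℝ} (hf : ∀ x, HasDerivAt f (f' x) x)
    (hf' : ∀ x, HasDerivAt f' (f'' x) x) (hf'' : ∀ x, 0 ≤ f'' x) : ConvexOn ℝ univ f :=
  convexOn_of_hasDerivWithinAt2_nonneg convex_univ
    (continuous_iff_continuousAt.2 fun x => (hf x).continuousAt).continuousOn
    (fun x _ => (hf x).hasDerivWithinAt) (fun x _ => (hf' x).hasDerivWithinAt) fun x _ => hf'' x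

/-- For `a, b > 0` the map `ξ ↦ α*₁(a,b,ξ)` is convex on `ℝ`: it is twice
differentiable and its second derivative lies between `min{a,b}` and `max{a,b}`. -/
theorem alphaOne_convex_second_deriv_bounds (a b : ℝ) (ha : 0 < a) (hb : 0 < b) :
    ConvexOn ℝ Set.univ (fun ξ => alphaOne a b ξ) ∧
    ∃ f' f'' : ℝ → ℝ,
      (∀ ξ : ℝ, HasDerivAt (fun ξ' => alphaOne a b ξ') (f' ξ) ξ) ∧
      (∀ ξ : ℝ, HasDerivAt f' (f'' ξ) ξ) ∧
      (∀ ξ : ℝ, min a b ≤ f'' ξ ∧ f'' ξ ≤ max a b) := by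
  obtain ⟨q, m, hq, rfl, rfl⟩ := exists_eq_mul_exp_and_eq_mul_exp_neg ha hb
  set f' := fun x => q * sinh m * mulCoth (m - x) - q * cosh m * (m - x)
  set f'' := fun x => q * cosh m - q * sinh m * deriv mulCoth (m - x)
  have hf : ∀ ξ, HasDerivAt (alphaOne (q * exp m) (q * exp (-m))) (f' ξ) ξ :=
    hasDerivAt_alphaOne_s8 hq m
  have hf' : ∀ ξ, HasDerivAt f' (f'' ξ) ξ :=
    hasDerivAt_mulCoth_sub (q * sinh m) (q * cosh m) m
  have hf'' : ∀ ξ, f'' ξ ∈ uIcc (q * exp m) (q * exp (-m)) := fun ξ =>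
    cosh_sub_sinh_mul_mem_uIcc (abs_deriv_mulCoth_le_one (m - ξ)) q m
  have hpos : 0 < min (q * exp m) (q * exp (-m)) := lt_min (by positivity) (by positivity)
  exact ⟨convexOn_univ_of_hasDerivAt2_nonneg hf hf' fun ξ => hpos.le.trans (hf'' ξ).1,
    f', f'', hf, hf', hf''⟩
end

section
/- For every fixed ξ ∈ ℝ, the function (a,b) ↦ α*₁(a,b,ξ) is positively one-homogeneous, i.e. α*₁(λa, λb, ξ) = λ·α*₁(a,b,ξ) for all a, b > 0 and λ > 0, and is jointly concave on (0,∞)². -/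
/-!
Since `∫₀¹ dθ / (θ s + (1 - θ) t) = (log s - log t) / (s - t) = 1 / Λ(s,t)`, the
harmonic-logarithmic mean is an average of weighted harmonic means,
`Λ_H(s,t) = ∫₀¹ s t / (θ s + (1 - θ) t) dθ`. Each of these is jointly concave on `(0,∞)²`, hence so
is `Λ_H`, which is therefore also continuous there. On the interval between `0` and `ξ`, `sinh x`
has the sign of `ξ`, which compensates the orientation of `∫₀^ξ`; so `α*₁(·,·,ξ)` is a
nonnegative superposition of the concave functions `(a,b) ↦ Λ_H(a e^{-x}, b e^x)`.
Homogeneity comes from `Λ(c s, c t) = c Λ(s,t)`.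
-/

open Real

open Set MeasureTheory

/-- Equal to `1 / ((1 - θ) / s + θ / t)` for `s, t ≠ 0`. -/
noncomputable def weightedHarmMean (θ s t : ℝ) : ℝ := s * t / (θ * s + (1 - θ) * t)

theorem convexCombination_pos {θ s t : ℝ} (hθ : θ ∈ Icc (0:ℝ) 1) (hs : 0 < s) (ht : 0 < t) :
    0 < θ * s + (1 - θ) * t :=
  convex_Ioi (0:ℝ) hs ht hθ.1 (sub_nonneg.2 hθ.2) (add_sub_cancel _ _)

theorem integral_inv_convexCombination {s t : ℝ} (hs : 0 < s) (ht : 0 < t) :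
    ∫ θ in (0:ℝ)..1, (θ * s + (1 - θ) * t)⁻¹ = (logMean s t)⁻¹ := by
  rcases eq_or_ne s t with rfl | hst
  · have hconst : ∀ θ : ℝ, θ * s + (1 - θ) * s = s := fun θ => by ring
    simp [logMean, hconst]
  · have hst' : s - t ≠ 0 := sub_ne_zero.2 hst
    have hlin : ∀ θ : ℝ, θ * s + (1 - θ) * t = t + (s - t) * θ := fun θ => by ring
    simp only [hlin, intervalIntegral.integral_comp_add_mul (fun x => x⁻¹) hst', mul_zero,
      add_zero, mul_one, add_sub_cancel, integral_inv_of_pos ht hs, logMean, if_neg hst,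
      log_div hs.ne' ht.ne', smul_eq_mul, inv_div]
    field_simp

theorem harmLogMean_eq_integral {s t : ℝ} (hs : 0 < s) (ht : 0 < t) :
    harmLogMean s t = ∫ θ in (0:ℝ)..1, weightedHarmMean θ s t := by
  simp only [harmLogMean, weightedHarmMean, div_eq_mul_inv, intervalIntegral.integral_const_mul,
    integral_inv_convexCombination hs ht]

theorem concaveOn_weightedHarmMean {θ : ℝ} (hθ : θ ∈ Icc (0:ℝ) 1) :
    ConcaveOn ℝ (Ioi 0 ×ˢ Ioi 0) fun p : ℝ × ℝ => weightedHarmMean θ p.1 p.2 := by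
  have hconv : Convex ℝ (Ioi (0:ℝ) ×ˢ Ioi (0:ℝ)) := (convex_Ioi 0).prod (convex_Ioi 0)
  refine ⟨hconv, ?_⟩
  rintro ⟨s₁, t₁⟩ h₁ ⟨s₂, t₂⟩ h₂ a b ha hb hab
  have hD₁ := convexCombination_pos hθ h₁.1 h₁.2
  have hD₂ := convexCombination_pos hθ h₂.1 h₂.2
  have hmix := hconv h₁ h₂ ha hb hab
  simp only [Prod.smul_mk, Prod.mk_add_mk, smul_eq_mul] at hmix ⊢
  simp only [weightedHarmMean, mul_div_assoc']
  rw [div_add_div _ _ hD₁.ne' hD₂.ne',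
    div_le_div_iff₀ (mul_pos hD₁ hD₂) (convexCombination_pos hθ hmix.1 hmix.2)]
  obtain rfl : b = 1 - a := by linarith
  have gap : (a * s₁ + (1 - a) * s₂) * (a * t₁ + (1 - a) * t₂)
        * ((θ * s₁ + (1 - θ) * t₁) * (θ * s₂ + (1 - θ) * t₂))
      - (a * (s₁ * t₁) * (θ * s₂ + (1 - θ) * t₂) + (θ * s₁ + (1 - θ) * t₁) * ((1 - a) * (s₂ * t₂)))
        * (θ * (a * s₁ + (1 - a) * s₂) + (1 - θ) * (a * t₁ + (1 - a) * t₂))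
      = a * (1 - a) * (θ * (1 - θ)) * (s₁ * t₂ - s₂ * t₁) ^ 2 := by ring
  rw [← sub_nonneg, gap]
  exact mul_nonneg (mul_nonneg (mul_nonneg ha hb) (mul_nonneg hθ.1 (sub_nonneg.2 hθ.2)))
    (sq_nonneg _)

theorem concaveOn_intervalIntegral {E : Type*} [AddCommGroup E] [Module ℝ E] {s : Set E}
    {f : E → ℝ → ℝ} {a b : ℝ} (hab : a ≤ b) (hf : ∀ θ ∈ Icc a b, ConcaveOn ℝ s fun x => f x θ)
    (hint : ∀ x ∈ s, IntervalIntegrable (f x) volume a b) :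
    ConcaveOn ℝ s fun x => ∫ θ in a..b, f x θ := by
  refine ⟨(hf a ⟨le_rfl, hab⟩).1, fun x hx y hy c d hc hd hcd => ?_⟩
  have hxy : c • x + d • y ∈ s := (hf a ⟨le_rfl, hab⟩).1 hx hy hc hd hcd
  calc c • (∫ θ in a..b, f x θ) + d • ∫ θ in a..b, f y θ
      = ∫ θ in a..b, (c • f x θ + d • f y θ) := by
        rw [← intervalIntegral.integral_smul, ← intervalIntegral.integral_smul]
        exact (intervalIntegral.integral_add ((hint x hx).smul c) ((hint y hy).smul d)).symm
    _ ≤ ∫ θ in a..b, f (c • x + d • y) θ :=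
        intervalIntegral.integral_mono_on hab (((hint x hx).smul c).add ((hint y hy).smul d))
          (hint _ hxy) fun θ hθ => (hf θ hθ).2 hx hy hc hd hcd

theorem concaveOn_harmLogMean :
    ConcaveOn ℝ (Ioi 0 ×ˢ Ioi 0) fun p : ℝ × ℝ => harmLogMean p.1 p.2 := by
  refine (concaveOn_intervalIntegral zero_le_one (fun θ hθ => concaveOn_weightedHarmMean hθ)
    fun p hp => ContinuousOn.intervalIntegrable ?_).congr fun p hp => ?_
  · rw [uIcc_of_le zero_le_one]
    exact continuousOn_const.div (by fun_prop) fun θ hθ => (convexCombination_pos hθ hp.1 hp.2).ne'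
  · exact (harmLogMean_eq_integral hp.1 hp.2).symm

theorem continuousOn_harmLogMean :
    ContinuousOn (fun p : ℝ × ℝ => harmLogMean p.1 p.2) (Ioi 0 ×ˢ Ioi 0) :=
  concaveOn_harmLogMean.continuousOn (isOpen_Ioi.prod isOpen_Ioi)

theorem logMean_mul {c s t : ℝ} (hc : 0 < c) (hs : 0 < s) (ht : 0 < t) :
    logMean (c * s) (c * t) = c * logMean s t := by
  rcases eq_or_ne s t with rfl | hst
  · simp [logMean]
  · rw [logMean, logMean, if_neg fun h => hst (mul_left_cancel₀ hc.ne' h), if_neg hst,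
      log_mul hc.ne' hs.ne', log_mul hc.ne' ht.ne', add_sub_add_left_eq_sub, ← mul_sub,
      mul_div_assoc]

theorem harmLogMean_mul {c s t : ℝ} (hc : 0 < c) (hs : 0 < s) (ht : 0 < t) :
    harmLogMean (c * s) (c * t) = c * harmLogMean s t := by
  rw [harmLogMean, harmLogMean, logMean_mul hc hs ht, mul_mul_mul_comm, mul_assoc,
    mul_div_mul_left _ _ hc.ne', mul_div_assoc]

theorem concaveOn_harmLogMean_mul {u v : ℝ} (hu : 0 < u) (hv : 0 < v) :
    ConcaveOn ℝ (Ioi 0 ×ˢ Ioi 0) fun p : ℝ × ℝ => harmLogMean (p.1 * u) (p.2 * v) := by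
  refine ⟨(convex_Ioi 0).prod (convex_Ioi 0), fun p hp q hq a b ha hb hab => ?_⟩
  have hp' : (p.1 * u, p.2 * v) ∈ Ioi (0:ℝ) ×ˢ Ioi 0 := ⟨mul_pos hp.1 hu, mul_pos hp.2 hv⟩
  have hq' : (q.1 * u, q.2 * v) ∈ Ioi (0:ℝ) ×ˢ Ioi 0 := ⟨mul_pos hq.1 hu, mul_pos hq.2 hv⟩
  refine (concaveOn_harmLogMean.2 hp' hq' ha hb hab).trans_eq ?_
  simp only [Prod.smul_mk, Prod.mk_add_mk, Prod.fst_add, Prod.snd_add, Prod.smul_fst,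
    Prod.smul_snd, smul_eq_mul]
  congr 1 <;> ring

theorem continuous_sinh_mul_harmLogMean {a b : ℝ} (ha : 0 < a) (hb : 0 < b) :
    Continuous fun x => sinh x * harmLogMean (a * exp (-x)) (b * exp x) :=
  continuous_sinh.mul <| continuousOn_harmLogMean.comp_continuous
    (f := fun x => (a * exp (-x), b * exp x)) (by fun_prop)
    fun x => ⟨mul_pos ha (exp_pos _), mul_pos hb (exp_pos _)⟩

theorem alphaOne_mul {a b lam ξ : ℝ} (ha : 0 < a) (hb : 0 < b) (hlam : 0 < lam) :
    alphaOne (lam * a) (lam * b) ξ = lam * alphaOne a b ξ := by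
  rw [alphaOne, alphaOne, ← intervalIntegral.integral_const_mul]
  refine intervalIntegral.integral_congr fun x _ => ?_
  simp only [mul_assoc lam, harmLogMean_mul hlam (mul_pos ha (exp_pos _)) (mul_pos hb (exp_pos _))]
  ring

theorem concaveOn_alphaOne (ξ : ℝ) :
    ConcaveOn ℝ (Ioi 0 ×ˢ Ioi 0) fun p : ℝ × ℝ => alphaOne p.1 p.2 ξ := by
  have hint : ∀ p ∈ Ioi (0:ℝ) ×ˢ Ioi 0, ∀ u v : ℝ, IntervalIntegrable
      (fun x => sinh x * harmLogMean (p.1 * exp (-x)) (p.2 * exp x)) volume u v :=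
    fun p hp u v => (continuous_sinh_mul_harmLogMean hp.1 hp.2).intervalIntegrable u v
  have hconc (x : ℝ) {c : ℝ} (hc : 0 ≤ c) :
      ConcaveOn ℝ (Ioi 0 ×ˢ Ioi 0) fun p : ℝ × ℝ => c * harmLogMean (p.1 * exp (-x)) (p.2 * exp x) :=
    (concaveOn_harmLogMean_mul (exp_pos _) (exp_pos _)).smul hc
  rcases le_total 0 ξ with hξ | hξ
  · exact concaveOn_intervalIntegral hξ (fun x hx => hconc x (sinh_nonneg_iff.2 hx.1))
      fun p hp => hint p hp 0 ξ
  · have hflip (p : ℝ × ℝ) : alphaOne p.1 p.2 ξ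
        = ∫ x in ξ..0, -sinh x * harmLogMean (p.1 * exp (-x)) (p.2 * exp x) := by
      simp only [alphaOne, intervalIntegral.integral_symm ξ 0, neg_mul, intervalIntegral.integral_neg]
    simp only [hflip]
    exact concaveOn_intervalIntegral hξ (fun x hx => hconc x (neg_nonneg.2 (sinh_nonpos_iff.2 hx.2)))
      fun p hp => by simpa only [Pi.neg_def, neg_mul] using (hint p hp ξ 0).neg

/-- For fixed `ξ`, `(a,b) ↦ α*₁(a,b,ξ)` is positively one-homogeneous and jointly
concave on `(0,∞)²`. -/
theorem alphaOne_homogeneous_concave (ξ : ℝ) :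
    (∀ a b lam : ℝ, 0 < a → 0 < b → 0 < lam →
      alphaOne (lam * a) (lam * b) ξ = lam * alphaOne a b ξ) ∧
    ConcaveOn ℝ (Set.Ioi (0:ℝ) ×ˢ Set.Ioi (0:ℝ))
      (fun p : ℝ × ℝ => alphaOne p.1 p.2 ξ) :=
  ⟨fun _ _ _ ha hb hlam => alphaOne_mul ha hb hlam, concaveOn_alphaOne ξ⟩
end

section
/- For all a, b > 0, ε > 0 and ξ ∈ ℝ one has α*_ε(a,b,ξ) ≤ ε²·√(ab)·(cosh(|ξ|/ε) - 1). -/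
open Real

/-- `α*_ε(a,b,ξ) = ε ∫₀^ξ sinh(x/ε) Λ_H(a e^{-x/ε}, b e^{x/ε}) dx`. -/
noncomputable def alphaEps (ε a b ξ : ℝ) : ℝ :=
  ε * ∫ x in (0:ℝ)..ξ,
    Real.sinh (x / ε) * harmLogMean (a * Real.exp (-x / ε)) (b * Real.exp (x / ε))

/-! The logarithmic mean dominates the geometric mean (after the substitution `s = eᵖ, t = e^q`
this is `y ≤ sinh y` for `y ≥ 0`), so `Λ_H(s,t) ≤ √(st)`, and along the integration path the
product of the two arguments of `Λ_H` is constantly `ab`. As `sinh (x/ε)` has the sign of `x`,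
the integrand lies between `0` and `sinh (x/ε) √(ab)` on either side of `0`, so the integral from
`0` to `ξ` is bounded by `√(ab) ∫₀^ξ sinh (x/ε) dx = ε √(ab) (cosh (ξ/ε) - 1)` whatever the sign
of `ξ`. -/

open MeasureTheory Set

lemma one_le_sinh_div_self {y : ℝ} (hy : y ≠ 0) : 1 ≤ sinh y / y := by
  rw [one_le_div_iff]
  rcases hy.lt_or_gt with hy | hy
  · exact Or.inr ⟨hy, sinh_le_self_iff.mpr hy.le⟩
  · exact Or.inl ⟨hy, self_le_sinh_iff.mpr hy.le⟩

lemma logMean_exp_exp {p q : ℝ} (h : p ≠ q) :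
    logMean (exp p) (exp q) = exp ((p + q) / 2) * (sinh ((p - q) / 2) / ((p - q) / 2)) := by
  have hpq : p - q ≠ 0 := sub_ne_zero.mpr h
  rw [logMean, if_neg (exp_injective.ne h), log_exp, log_exp, sinh_eq]
  field_simp
  rw [mul_sub, ← exp_add, ← exp_add]
  ring_nf

lemma sqrt_mul_le_logMean {s t : ℝ} (hs : 0 < s) (ht : 0 < t) : √(s * t) ≤ logMean s t := by
  by_cases hst : s = t
  · rw [logMean, if_pos hst, hst, sqrt_mul_self ht.le]
  have hlog : log s ≠ log t := fun h => hst (log_injOn_pos hs ht h)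
  rw [← exp_log hs, ← exp_log ht, logMean_exp_exp hlog, ← exp_add, ← exp_half]
  exact le_mul_of_one_le_right (exp_pos _).le
    (one_le_sinh_div_self (div_ne_zero (sub_ne_zero.mpr hlog) two_ne_zero))

lemma harmLogMean_nonneg {s t : ℝ} (hs : 0 < s) (ht : 0 < t) : 0 ≤ harmLogMean s t :=
  div_nonneg (mul_pos hs ht).le ((sqrt_nonneg _).trans (sqrt_mul_le_logMean hs ht))

lemma harmLogMean_le_sqrt_mul {s t : ℝ} (hs : 0 < s) (ht : 0 < t) :
    harmLogMean s t ≤ √(s * t) := by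
  have hst : 0 < √(s * t) := sqrt_pos.mpr (mul_pos hs ht)
  rw [harmLogMean, div_le_iff₀ (hst.trans_le (sqrt_mul_le_logMean hs ht))]
  calc s * t = √(s * t) * √(s * t) := (mul_self_sqrt (mul_pos hs ht).le).symm
    _ ≤ √(s * t) * logMean s t := mul_le_mul_of_nonneg_left (sqrt_mul_le_logMean hs ht) hst.le

lemma harmLogMean_mul_exp_le_sqrt {a b : ℝ} (ha : 0 < a) (hb : 0 < b) (u : ℝ) :
    harmLogMean (a * exp (-u)) (b * exp u) ≤ √(a * b) := by
  have hprod : a * exp (-u) * (b * exp u) = a * b := by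
    rw [mul_mul_mul_comm, ← exp_add, neg_add_cancel, exp_zero, mul_one]
  exact hprod ▸ harmLogMean_le_sqrt_mul (by positivity) (by positivity)

lemma integral_sinh_div {ε : ℝ} (hε : ε ≠ 0) (ξ : ℝ) :
    ∫ x in (0 : ℝ)..ξ, sinh (x / ε) = ε * (cosh (ξ / ε) - 1) := by
  rw [intervalIntegral.integral_comp_div _ hε, smul_eq_mul, zero_div,
    intervalIntegral.integral_eq_sub_of_hasDerivAt (fun x _ => hasDerivAt_cosh x)
      (continuous_sinh.intervalIntegrable _ _), cosh_zero]

-- Only `g` needs to be integrable: otherwise `∫ f = 0`, and `0 ≤ ∫ g` anyway.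
lemma intervalIntegral.integral_le_of_nonneg_of_le {f g : ℝ → ℝ} {a b : ℝ} (hab : a ≤ b)
    (hg : IntervalIntegrable g volume a b) (hf : ∀ x ∈ Ioc a b, 0 ≤ f x)
    (hfg : ∀ x ∈ Ioc a b, f x ≤ g x) :
    ∫ x in a..b, f x ≤ ∫ x in a..b, g x := by
  rw [intervalIntegral.integral_of_le hab, intervalIntegral.integral_of_le hab]
  exact integral_mono_of_nonneg (ae_restrict_of_forall_mem measurableSet_Ioc hf)
    ((intervalIntegrable_iff_integrableOn_Ioc_of_le hab).mp hg)
    (ae_restrict_of_forall_mem measurableSet_Ioc hfg)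

lemma intervalIntegral.integral_zero_mono_of_sign {f g : ℝ → ℝ} {ξ : ℝ}
    (hg : IntervalIntegrable g volume 0 ξ)
    (hpos : ∀ x, 0 ≤ x → 0 ≤ f x ∧ f x ≤ g x) (hneg : ∀ x ≤ 0, g x ≤ f x ∧ f x ≤ 0) :
    ∫ x in (0 : ℝ)..ξ, f x ≤ ∫ x in (0 : ℝ)..ξ, g x := by
  rcases le_total 0 ξ with hξ | hξ
  · exact integral_le_of_nonneg_of_le hξ hg (fun x hx => (hpos x hx.1.le).1)
      (fun x hx => (hpos x hx.1.le).2)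
  · rw [integral_symm ξ 0, integral_symm ξ 0 (f := g), neg_le_neg_iff, ← neg_le_neg_iff,
      ← integral_neg, ← integral_neg]
    exact integral_le_of_nonneg_of_le hξ hg.symm.neg
      (fun x hx => neg_nonneg.mpr (hneg x hx.2).2) (fun x hx => neg_le_neg (hneg x hx.2).1)

/-- `α*_ε(a,b,ξ) ≤ ε² √(ab) (cosh(|ξ|/ε) - 1)`. -/
theorem alphaEps_le_cosh_bound (ε a b ξ : ℝ) (hε : 0 < ε) (ha : 0 < a) (hb : 0 < b) :
    alphaEps ε a b ξ ≤ ε ^ 2 * Real.sqrt (a * b) * (Real.cosh (|ξ| / ε) - 1) := by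
  set H : ℝ → ℝ := fun x => harmLogMean (a * exp (-(x / ε))) (b * exp (x / ε))
  have hH : ∀ x, 0 ≤ H x ∧ H x ≤ √(a * b) := fun x =>
    ⟨harmLogMean_nonneg (by positivity) (by positivity), harmLogMean_mul_exp_le_sqrt ha hb _⟩
  have hmono :
      ∫ x in (0 : ℝ)..ξ, sinh (x / ε) * H x ≤ ∫ x in (0 : ℝ)..ξ, sinh (x / ε) * √(a * b) :=
    intervalIntegral.integral_zero_mono_of_sign
      (((continuous_sinh.comp (continuous_id.div_const ε)).mul continuous_const).intervalIntegrable
        _ _)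
      (fun x hx => by
        have hsinh := sinh_nonneg_iff.mpr (div_nonneg hx hε.le)
        exact ⟨mul_nonneg hsinh (hH x).1, mul_le_mul_of_nonneg_left (hH x).2 hsinh⟩)
      (fun x hx => by
        have hsinh := sinh_nonpos_iff.mpr (div_nonpos_of_nonpos_of_nonneg hx hε.le)
        exact ⟨mul_le_mul_of_nonpos_left (hH x).2 hsinh,
          mul_nonpos_of_nonpos_of_nonneg hsinh (hH x).1⟩)
  calc alphaEps ε a b ξ = ε * ∫ x in (0 : ℝ)..ξ, sinh (x / ε) * H x := by
        simp only [alphaEps, H, neg_div]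
    _ ≤ ε * ∫ x in (0 : ℝ)..ξ, sinh (x / ε) * √(a * b) := mul_le_mul_of_nonneg_left hmono hε.le
    _ = ε ^ 2 * √(a * b) * (cosh (|ξ| / ε) - 1) := by
      rw [intervalIntegral.integral_mul_const, integral_sinh_div hε.ne', ← cosh_abs (ξ / ε),
        abs_div, abs_of_pos hε]
      ring
end

section
/- For all a, b > 0, ε > 0 and ξ ∈ ℝ, setting q := ε·log(a/b) - ξ, the Scharfetter–Gummel flux admits the kinetic-relation representation ε·(𝔟(q/ε)·a - 𝔟(-q/ε)·b) = 2ε·sinh(ξ/(2ε))·Λ_H(a·e^{-ξ/(2ε)}, b·e^{ξ/(2ε)}). -/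
open Real

/-- The Bernoulli function `𝔟(s) = s/(e^s - 1)` for `s ≠ 0`, with `𝔟(0) = 1`. -/
noncomputable def bern (s : ℝ) : ℝ :=
  if s = 0 then 1 else s / (Real.exp s - 1)

/-!
With `x = a e^{-t}`, `y = b e^{t}` and `t = ξ/(2ε)`, the argument `q/ε` of the Bernoulli
function is `log x - log y`, and `x 𝔟(log x - log y) = Λ_H(x, y)` is symmetric in `x, y`.
The flux is therefore `ε (e^t - e^{-t}) Λ_H(x, y)`.
-/

lemma logMean_comm (x y : ℝ) : logMean x y = logMean y x := by
  unfold logMean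
  by_cases h : x = y
  · simp [h]
  · rw [if_neg h, if_neg (Ne.symm h), ← neg_sub y, ← neg_sub (log y), neg_div_neg_eq]

lemma harmLogMean_comm (x y : ℝ) : harmLogMean x y = harmLogMean y x := by
  rw [harmLogMean, harmLogMean, logMean_comm, mul_comm]

lemma mul_bern_log_sub_log {x y : ℝ} (hx : 0 < x) (hy : 0 < y) :
    x * bern (log x - log y) = harmLogMean x y := by
  by_cases hxy : x = y
  · subst hxy
    simp [bern, harmLogMean, logMean, hx.ne']
  have hu : log x - log y ≠ 0 :=
    sub_ne_zero.mpr fun h => hxy (log_injOn_pos hx hy h)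
  have hexp : exp (log x - log y) = x / y := by
    rw [exp_sub, exp_log hx, exp_log hy]
  have hxy' : x - y ≠ 0 := sub_ne_zero.mpr hxy
  rw [bern, if_neg hu, hexp, harmLogMean, logMean, if_neg hxy]
  field_simp

lemma bern_log_sub_log_flux {x y : ℝ} (hx : 0 < x) (hy : 0 < y) (t : ℝ) :
    bern (log x - log y) * (x * exp t) - bern (log y - log x) * (y * exp (-t)) =
      2 * sinh t * harmLogMean x y := by
  have hxy := mul_bern_log_sub_log hx hy
  have hyx := mul_bern_log_sub_log hy hx
  rw [← harmLogMean_comm] at hyx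
  calc bern (log x - log y) * (x * exp t) - bern (log y - log x) * (y * exp (-t))
      = (exp t - exp (-t)) * harmLogMean x y := by
        linear_combination exp t * hxy - exp (-t) * hyx
    _ = 2 * sinh t * harmLogMean x y := by rw [sinh_eq]; ring

/-- Kinetic-relation representation of the Scharfetter–Gummel flux. -/
theorem SG_flux_kinetic_relation (ε a b ξ : ℝ) (hε : 0 < ε) (ha : 0 < a) (hb : 0 < b) :
    ε * (bern ((ε * Real.log (a / b) - ξ) / ε) * a -
          bern (-(ε * Real.log (a / b) - ξ) / ε) * b) =
      2 * ε * Real.sinh (ξ / (2 * ε)) *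
        harmLogMean (a * Real.exp (-ξ / (2 * ε))) (b * Real.exp (ξ / (2 * ε))) := by
  set t := ξ / (2 * ε) with ht
  have hx : 0 < a * exp (-t) := by positivity
  have hy : 0 < b * exp t := by positivity
  have hq : (ε * log (a / b) - ξ) / ε = log (a * exp (-t)) - log (b * exp t) := by
    rw [log_mul ha.ne' (exp_ne_zero _), log_mul hb.ne' (exp_ne_zero _), log_exp, log_exp,
      log_div ha.ne' hb.ne', ht]
    field_simp
    ring
  have hq' : -(ε * log (a / b) - ξ) / ε = log (b * exp t) - log (a * exp (-t)) := by
    rw [neg_div, hq, neg_sub]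
  have flux := bern_log_sub_log_flux hx hy t
  simp only [mul_assoc, ← exp_add, neg_add_cancel, add_neg_cancel, exp_zero, mul_one] at flux
  rw [hq, hq', flux, neg_div, ← ht]
  ring
end

section
/- For all real a, b and every q ∈ ℝ, the Scharfetter–Gummel flux converges to the upwind flux in the vanishing-diffusion limit: lim_{ε → 0⁺} ε·(𝔟(-q/ε)·a - 𝔟(q/ε)·b) = q⁺·a - q⁻·b, where q⁺ = max{q, 0} and q⁻ = max{-q, 0}. -/
/-! For `c ≠ 0` and `ε ≠ 0`, `ε 𝔟(c/ε) = c (e^{c/ε} - 1)⁻¹`, and `(e^s - 1)⁻¹` tends to `0` as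
`s → +∞` and to `-1` as `s → -∞`. Hence `ε 𝔟(c/ε) → max (-c) 0` as `ε → 0⁺`, and the flux is a
linear combination of two such terms, with `c = -q` and `c = q`. -/

open Real Filter

open Topology

lemma tendsto_inv_exp_sub_one_atTop : Tendsto (fun s => (exp s - 1)⁻¹) atTop (𝓝 0) :=
  (tendsto_atTop_add_const_right _ (-1) tendsto_exp_atTop).inv_tendsto_atTop

lemma tendsto_inv_exp_sub_one_atBot : Tendsto (fun s => (exp s - 1)⁻¹) atBot (𝓝 (-1)) := by
  simpa using (tendsto_exp_atBot.sub_const 1).inv₀ (by norm_num)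

lemma mul_bern_div {c ε : ℝ} (hc : c ≠ 0) (hε : ε ≠ 0) :
    ε * bern (c / ε) = c * (exp (c / ε) - 1)⁻¹ := by
  have hcε : c / ε ≠ 0 := div_ne_zero hc hε
  rw [bern, if_neg hcε, ← div_eq_mul_inv, mul_div_assoc', mul_div_cancel₀ c hε]

lemma tendsto_mul_bern_div (c : ℝ) :
    Tendsto (fun ε => ε * bern (c / ε)) (𝓝[>] 0) (𝓝 (max (-c) 0)) := by
  rcases lt_trichotomy c 0 with hneg | rfl | hpos
  · have hdiv : Tendsto (fun ε => c / ε) (𝓝[>] 0) atBot := by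
      simpa only [div_eq_mul_inv] using tendsto_inv_nhdsGT_zero.const_mul_atTop_of_neg hneg
    have hlim := (tendsto_inv_exp_sub_one_atBot.comp hdiv).const_mul c
    rw [max_eq_left (neg_nonneg.mpr hneg.le), ← mul_neg_one]
    refine hlim.congr' ?_
    filter_upwards [self_mem_nhdsWithin] with ε hε
    exact (mul_bern_div hneg.ne (ne_of_gt hε)).symm
  · simp only [zero_div, bern, if_pos, mul_one, neg_zero, max_self]
    exact nhdsWithin_le_nhds
  · have hdiv : Tendsto (fun ε => c / ε) (𝓝[>] 0) atTop := by
      simpa only [div_eq_mul_inv] using tendsto_inv_nhdsGT_zero.const_mul_atTop hpos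
    have hlim := (tendsto_inv_exp_sub_one_atTop.comp hdiv).const_mul c
    rw [max_eq_right (neg_nonpos.mpr hpos.le)]
    rw [mul_zero] at hlim
    refine hlim.congr' ?_
    filter_upwards [self_mem_nhdsWithin] with ε hε
    exact (mul_bern_div hpos.ne' (ne_of_gt hε)).symm

/-- In the vanishing-diffusion limit, the Scharfetter–Gummel flux converges to the
upwind flux: `ε(𝔟(-q/ε)a - 𝔟(q/ε)b) → q⁺ a - q⁻ b` as `ε → 0⁺`. -/
theorem SG_flux_tendsto_upwind (a b q : ℝ) :
    Tendsto (fun ε : ℝ => ε * (bern (-q / ε) * a - bern (q / ε) * b))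
      (nhdsWithin 0 (Set.Ioi 0)) (nhds (max q 0 * a - max (-q) 0 * b)) := by
  have hup := (tendsto_mul_bern_div (-q)).mul_const a
  have hdown := (tendsto_mul_bern_div q).mul_const b
  rw [neg_neg] at hup
  exact (hup.sub hdown).congr fun ε => by ring
end
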